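/- arXiv:2305.11743 — 2 statements merged into one kernel-verified Lean document; each statement's English description precedes it below -/
import Mathlib

section
/- Let n_1, n_2, n_3 be positive integers and let u = (a, -b, -c) ∈ Ker_Z(n_1,n_2,n_3) with a > 0 and b, c ≥ 0, and suppose u has no proper conformal decomposition in Ker_Z(n_1,n_2,n_3) (i.e., u is a Graver element). Let D(u) = (a, -b, -c, b, c) ∈ Z^5. Then D(u) admits no proper semiconformal decomposition D(u) = D(v) + D(w) with nonzero v, w ∈ Ker_Z(n_1,n_2,n_3), where D(x) = (x_1, x_2, x_3, -x_2, -x_3). -/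
/-- Membership in `Ker_Z(n_1,n_2,n_3)`. -/
def InKer (n1 n2 n3 : ℕ) (u : Fin 3 → ℤ) : Prop :=
  u 0 * (n1 : ℤ) + u 1 * (n2 : ℤ) + u 2 * (n3 : ℤ) = 0

/-- Conformality of a decomposition `x = y + z`. -/
def Conf (x y z : Fin 3 → ℤ) : Prop :=
  x = y + z ∧ ∀ l, max (x l) 0 = max (y l) 0 + max (z l) 0 ∧
    max (-(x l)) 0 = max (-(y l)) 0 + max (-(z l)) 0

/-- Semiconformality of a decomposition `v + w` of 5-dimensional vectors. -/
def SemiConf (v w : Fin 5 → ℤ) : Prop :=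
  ∀ l, (0 < v l → 0 ≤ w l) ∧ (w l < 0 → v l ≤ 0)

/-- The second Lawrence lifting map `D(x) = (x_1, x_2, x_3, -x_2, -x_3)`. -/
def Dmap (x : Fin 3 → ℤ) : Fin 5 → ℤ := ![x 0, x 1, x 2, -(x 1), -(x 2)]

/-- If `u = (a, -b, -c)` with `a > 0`, `b, c ≥ 0` is a Graver element of the kernel,
then `D(u)` admits no proper semiconformal decomposition into nonzero kernel images. -/
theorem stmt15 (n1 n2 n3 : ℕ) (h1 : 0 < n1) (h2 : 0 < n2) (h3 : 0 < n3)
    (a b c : ℤ) (ha : 0 < a) (hb : 0 ≤ b) (hc : 0 ≤ c)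
    (hker : InKer n1 n2 n3 ![a, -b, -c])
    (hGr : ¬ ∃ v w : Fin 3 → ℤ, InKer n1 n2 n3 v ∧ InKer n1 n2 n3 w ∧
      v ≠ 0 ∧ w ≠ 0 ∧ Conf ![a, -b, -c] v w) :
    ¬ ∃ v w : Fin 3 → ℤ, InKer n1 n2 n3 v ∧ InKer n1 n2 n3 w ∧ v ≠ 0 ∧ w ≠ 0 ∧
      Dmap ![a, -b, -c] = Dmap v + Dmap w ∧ SemiConf (Dmap v) (Dmap w) := by
  rintro ⟨v, w, hv, hw, hv0, hw0, hD, hS⟩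
  have e0 := congrFun hD 0
  have e1 := congrFun hD 1
  have e2 := congrFun hD 2
  simp [Dmap] at e0 e1 e2
  have s1 := hS 1
  have s2 := hS 2
  have s3 := hS 3
  have s4 := hS 4
  simp [Dmap] at s1 s2 s3 s4
  have hv1 : v 1 ≤ 0 := by omega
  have hw1 : w 1 ≤ 0 := by omega
  have hv2 : v 2 ≤ 0 := by omega
  have hw2 : w 2 ≤ 0 := by omega
  have hn1 : (0:ℤ) < (n1:ℤ) := by exact_mod_cast h1
  have hn2 : (0:ℤ) < (n2:ℤ) := by exact_mod_cast h2
  have hn3 : (0:ℤ) < (n3:ℤ) := by exact_mod_cast h3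
  have hv' : v 0 * (n1:ℤ) + v 1 * (n2:ℤ) + v 2 * (n3:ℤ) = 0 := hv
  have hw' : w 0 * (n1:ℤ) + w 1 * (n2:ℤ) + w 2 * (n3:ℤ) = 0 := hw
  have hV0 : 0 ≤ v 0 := by nlinarith [mul_nonpos_of_nonpos_of_nonneg hv1 hn2.le,
    mul_nonpos_of_nonpos_of_nonneg hv2 hn3.le]
  have hW0 : 0 ≤ w 0 := by nlinarith [mul_nonpos_of_nonpos_of_nonneg hw1 hn2.le,
    mul_nonpos_of_nonpos_of_nonneg hw2 hn3.le]
  apply hGr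
  refine ⟨v, w, hv, hw, hv0, hw0, ?_, ?_⟩
  · funext l
    fin_cases l <;> simp <;> omega
  · intro l
    fin_cases l <;> simp <;> constructor <;> omega
end

section
/- Let n_1, n_2, n_3 be positive integers with gcd(n_1,n_2,n_3)=1 such that (n_1,n_2,n_3) is a complete intersection on n_1: with c_l the least positive integer with c_l·n_l in the semigroup generated by the other two, c_2·n_2 = c_3·n_3 ≠ c_1·n_1. Define D: Ker_Z(n_1,n_2,n_3) → Z^5 by D(u) = (u_1, u_2, u_3, -u_2, -u_3), and let L = {D(u) : u ∈ Ker_Z(n_1,n_2,n_3)}. Then every element of the Graver basis of L is indispensable in L (i.e., L is strongly robust): every D(u) with u having no proper conformal decomposition admits no proper semiconformal decomposition into nonzero elements of L. -/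
/-- Membership in the numerical semigroup generated by `a` and `b`. -/
def InSg (a b x : ℕ) : Prop := ∃ p q : ℕ, x = p * a + q * b

/-- `c` is the least positive integer such that `c·m ∈ ⟨a, b⟩`. -/
def IsLeastC (a b m c : ℕ) : Prop :=
  0 < c ∧ InSg a b (c * m) ∧ ∀ c', 0 < c' → InSg a b (c' * m) → c ≤ c'

lemma sg_bound {a b m c : ℕ} (h : IsLeastC a b m c) {k p q : ℤ}
    (hk : 0 < k) (hp : 0 ≤ p) (hq : 0 ≤ q) (he : k * m = p * a + q * b) :
    (c : ℤ) ≤ k := by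
  lift k to ℕ using hk.le
  lift p to ℕ using hp
  lift q to ℕ using hq
  have : k * m = p * a + q * b := by exact_mod_cast he
  exact_mod_cast h.2.2 k (by exact_mod_cast hk) ⟨p, q, this⟩

lemma keylemma (n1 n2 n3 c1 c2 c3 : ℕ)
    (h1 : 0 < n1) (h2 : 0 < n2) (h3 : 0 < n3)
    (hc1 : IsLeastC n2 n3 n1 c1)
    (hc2 : IsLeastC n1 n3 n2 c2)
    (hc3 : IsLeastC n1 n2 n3 c3)
    (hCI : c2 * n2 = c3 * n3 ∧ c2 * n2 ≠ c1 * n1)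
    (K : ℤ) (hK0 : 0 < K) (hKe : K * n1 = (c2 : ℤ) * n2) : False := by
  have hn1 : (0 : ℤ) < n1 := by exact_mod_cast h1
  have hn2 : (0 : ℤ) < n2 := by exact_mod_cast h2
  have hn3 : (0 : ℤ) < n3 := by exact_mod_cast h3
  have hKc1 : (c1 : ℤ) ≤ K :=
    sg_bound hc1 hK0 (show (0:ℤ) ≤ c2 by positivity) (le_refl 0)
      (by linarith)
  have hKne : K ≠ (c1 : ℤ) := by
    intro h
    apply hCI.2
    have : (c2 : ℤ) * n2 = (c1 : ℤ) * n1 := by rw [← hKe, h]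
    exact_mod_cast this
  have hKgt : (c1 : ℤ) < K := lt_of_le_of_ne hKc1 (Ne.symm hKne)
  obtain ⟨a, b, hab⟩ := hc1.2.1
  have habZ : (c1 : ℤ) * n1 = (a : ℤ) * n2 + (b : ℤ) * n3 := by exact_mod_cast hab
  have ha : (a : ℤ) < c2 := by
    have h1' : (a : ℤ) * n2 < (c2 : ℤ) * n2 := by
      nlinarith [mul_nonneg (show (0:ℤ) ≤ b by positivity) hn3.le]
    exact lt_of_mul_lt_mul_right h1' hn2.le
  have ha0 : (a : ℤ) = 0 := by
    have hle : (c2 : ℤ) ≤ (c2 : ℤ) - a :=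
      sg_bound (k := (c2 : ℤ) - a) (p := K - c1) (q := (b : ℤ)) hc2
        (by linarith) (by linarith) (by positivity)
        (by linear_combination habZ - hKe)
    have : (0 : ℤ) ≤ a := by positivity
    linarith
  have hb : (c1 : ℤ) * n1 = (b : ℤ) * n3 := by rw [habZ, ha0]; ring
  have hc1pos : (0 : ℤ) < c1 := by exact_mod_cast hc1.1
  have hbpos : (0 : ℤ) < b := by nlinarith [mul_pos hc1pos hn1]
  have hbc3 : (c3 : ℤ) ≤ b :=
    sg_bound (k := (b : ℤ)) (p := (c1 : ℤ)) (q := (0 : ℤ)) hc3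
      hbpos hc1pos.le (le_refl 0) (by linarith)
  have hCIZ : (c2 : ℤ) * n2 = (c3 : ℤ) * n3 := by exact_mod_cast hCI.1
  nlinarith [mul_le_mul_of_nonneg_right hbc3 hn3.le, mul_lt_mul_of_pos_right hKgt hn1]


set_option maxHeartbeats 2000000 in
/-- If `(n_1,n_2,n_3)` is a complete intersection on `n_1`, then the lattice
`L = D(Ker_Z(n_1,n_2,n_3))` is strongly robust: every Graver element of `L` is
indispensable. -/
theorem stmt16 (n1 n2 n3 c1 c2 c3 : ℕ)
    (h1 : 0 < n1) (h2 : 0 < n2) (h3 : 0 < n3)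
    (hg : Nat.gcd n1 (Nat.gcd n2 n3) = 1)
    (hc1 : IsLeastC n2 n3 n1 c1)
    (hc2 : IsLeastC n1 n3 n2 c2)
    (hc3 : IsLeastC n1 n2 n3 c3)
    (hCI : c2 * n2 = c3 * n3 ∧ c2 * n2 ≠ c1 * n1) :
    ∀ u : Fin 3 → ℤ, InKer n1 n2 n3 u → u ≠ 0 →
      (¬ ∃ v w : Fin 3 → ℤ, InKer n1 n2 n3 v ∧ InKer n1 n2 n3 w ∧
        v ≠ 0 ∧ w ≠ 0 ∧ Conf u v w) →
      ¬ ∃ v w : Fin 3 → ℤ, InKer n1 n2 n3 v ∧ InKer n1 n2 n3 w ∧ v ≠ 0 ∧ w ≠ 0 ∧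
        Dmap u = Dmap v + Dmap w ∧ SemiConf (Dmap v) (Dmap w) := by
  intro u hu hune hgraver
  rintro ⟨v, w, hv, hw, hvne, hwne, heq, hsc⟩
  clear hg
  have hn1 : (0 : ℤ) < n1 := by exact_mod_cast h1
  have hn2 : (0 : ℤ) < n2 := by exact_mod_cast h2
  have hn3 : (0 : ℤ) < n3 := by exact_mod_cast h3
  have hc2p : 0 < c2 := hc2.1
  have hc3p : 0 < c3 := hc3.1
  have hCIZ : (c2 : ℤ) * n2 = (c3 : ℤ) * n3 := by exact_mod_cast hCI.1
  have e0 : u 0 = v 0 + w 0 := congrFun heq 0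
  have e1 : u 1 = v 1 + w 1 := congrFun heq 1
  have e2 : u 2 = v 2 + w 2 := congrFun heq 2
  have s0 : (0 < v 0 → 0 ≤ w 0) ∧ (w 0 < 0 → v 0 ≤ 0) := hsc 0
  have s1 : (0 < v 1 → 0 ≤ w 1) ∧ (w 1 < 0 → v 1 ≤ 0) := hsc 1
  have s2 : (0 < v 2 → 0 ≤ w 2) ∧ (w 2 < 0 → v 2 ≤ 0) := hsc 2
  have s3 : (0 < -(v 1) → 0 ≤ -(w 1)) ∧ (-(w 1) < 0 → -(v 1) ≤ 0) := hsc 3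
  have s4 : (0 < -(v 2) → 0 ≤ -(w 2)) ∧ (-(w 2) < 0 → -(v 2) ≤ 0) := hsc 4
  have hcmp1 : (0 ≤ v 1 ∧ 0 ≤ w 1) ∨ (v 1 ≤ 0 ∧ w 1 ≤ 0) := by clear * - s1 s3; omega
  have hcmp2 : (0 ≤ v 2 ∧ 0 ≤ w 2) ∨ (v 2 ≤ 0 ∧ w 2 ≤ 0) := by clear * - s2 s4; omega
  have hvK : v 0 * (n1:ℤ) + v 1 * n2 + v 2 * n3 = 0 := hv
  have hwK : w 0 * (n1:ℤ) + w 1 * n2 + w 2 * n3 = 0 := hw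
  have huK : u 0 * (n1:ℤ) + u 1 * n2 + u 2 * n3 = 0 := hu
  by_cases hbad : v 0 < 0 ∧ 0 < w 0
  case neg =>
    apply hgraver
    have m0 : max (u 0) 0 = max (v 0) 0 + max (w 0) 0 ∧
        max (-(u 0)) 0 = max (-(v 0)) 0 + max (-(w 0)) 0 := by clear * - e0 s0 hbad; omega
    have m1 : max (u 1) 0 = max (v 1) 0 + max (w 1) 0 ∧
        max (-(u 1)) 0 = max (-(v 1)) 0 + max (-(w 1)) 0 := by clear * - e1 s1 s3; omega
    have m2 : max (u 2) 0 = max (v 2) 0 + max (w 2) 0 ∧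
        max (-(u 2)) 0 = max (-(v 2)) 0 + max (-(w 2)) 0 := by clear * - e2 s2 s4; omega
    refine ⟨v, w, hv, hw, hvne, hwne, ?_, fun l => ?_⟩
    · funext i
      fin_cases i
      · exact e0
      · exact e1
      · exact e2
    · fin_cases l
      · exact m0
      · exact m1
      · exact m2
  case pos =>
    obtain ⟨hv0, hw0⟩ := hbad
    rcases hcmp1 with ⟨ha1, hb1⟩ | ⟨ha1, hb1⟩ <;> rcases hcmp2 with ⟨ha2, hb2⟩ | ⟨ha2, hb2⟩
    · nlinarith [mul_pos hw0 hn1, mul_nonneg hb1 hn2.le, mul_nonneg hb2 hn3.le]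
    · -- v1 ≥ c2, -w2 ≥ c3
      have hv1pos : 0 < v 1 := by
        have hp : 0 < v 1 * (n2:ℤ) := by
          nlinarith [mul_pos (show (0:ℤ) < -(v 0) by linarith) hn1,
            mul_nonneg (show (0:ℤ) ≤ -(v 2) by linarith) hn3.le]
        nlinarith
      have hv1c2 : (c2 : ℤ) ≤ v 1 :=
        sg_bound (k := v 1) (p := -(v 0)) (q := -(v 2)) hc2 hv1pos
          (by linarith) (by linarith) (by linarith)
      have hw2pos : 0 < -(w 2) := by
        have hp : 0 < -(w 2) * (n3:ℤ) := by
          nlinarith [mul_pos hw0 hn1, mul_nonneg hb1 hn2.le]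
        nlinarith
      have hw2c3 : (c3 : ℤ) ≤ -(w 2) :=
        sg_bound (k := -(w 2)) (p := w 0) (q := w 1) hc3 hw2pos
          hw0.le hb1 (by linarith)
      by_cases hz : u = ![0, (c2:ℤ), -(c3:ℤ)]
      · have hu0 : u 0 = 0 := by rw [hz]; rfl
        have hu1 : u 1 = (c2:ℤ) := by rw [hz]; rfl
        have hu2 : u 2 = -(c3:ℤ) := by rw [hz]; rfl
        have hv1 : v 1 = (c2:ℤ) := by clear * - hu1 e1 hv1c2 hb1; omega
        have hv2 : v 2 = 0 := by clear * - hu2 e2 hw2c3 ha2; omega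
        exact keylemma n1 n2 n3 c1 c2 c3 h1 h2 h3 hc1 hc2 hc3 hCI (-(v 0))
          (by linarith) (by rw [hv1, hv2] at hvK; linarith)
      · apply hgraver
        have g1 : (c2:ℤ) ≤ u 1 := by clear * - e1 hv1c2 hb1; omega
        have g2 : u 2 ≤ -(c3:ℤ) := by clear * - e2 hw2c3 ha2; omega
        have m0 : max (u 0) 0 = max (0:ℤ) 0 + max (u 0 - 0) 0 ∧
            max (-(u 0)) 0 = max (-(0:ℤ)) 0 + max (-(u 0 - 0)) 0 := by clear * - g1; omega
        have m1 : max (u 1) 0 = max ((c2:ℤ)) 0 + max (u 1 - (c2:ℤ)) 0 ∧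
            max (-(u 1)) 0 = max (-((c2:ℤ))) 0 + max (-(u 1 - (c2:ℤ))) 0 := by clear * - g1; omega
        have m2 : max (u 2) 0 = max (-(c3:ℤ)) 0 + max (u 2 - -(c3:ℤ)) 0 ∧
            max (-(u 2)) 0 = max (-(-(c3:ℤ))) 0 + max (-(u 2 - -(c3:ℤ))) 0 := by clear * - g2; omega
        refine ⟨![0, (c2:ℤ), -(c3:ℤ)], u - ![0, (c2:ℤ), -(c3:ℤ)], ?_, ?_, ?_,
          sub_ne_zero.mpr hz, ?_, fun l => ?_⟩
        · show (0:ℤ) * n1 + (c2:ℤ) * n2 + -(c3:ℤ) * n3 = 0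
          linarith
        · show (u 0 - 0) * (n1:ℤ) + (u 1 - (c2:ℤ)) * n2 + (u 2 - -(c3:ℤ)) * n3 = 0
          linarith
        · intro h
          have h1' : (c2:ℤ) = 0 := congrFun h 1
          clear * - h1' hc2p; omega
        · funext i
          fin_cases i
          · exact (by ring : u 0 = 0 + (u 0 - 0))
          · exact (by ring : u 1 = (c2:ℤ) + (u 1 - (c2:ℤ)))
          · exact (by ring : u 2 = -(c3:ℤ) + (u 2 - -(c3:ℤ)))
        · fin_cases l
          · exact m0
          · exact m1
          · exact m2
    · -- v2 ≥ c3, -w1 ≥ c2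
      have hv2pos : 0 < v 2 := by
        have hp : 0 < v 2 * (n3:ℤ) := by
          nlinarith [mul_pos (show (0:ℤ) < -(v 0) by linarith) hn1,
            mul_nonneg (show (0:ℤ) ≤ -(v 1) by linarith) hn2.le]
        nlinarith
      have hv2c3 : (c3 : ℤ) ≤ v 2 :=
        sg_bound (k := v 2) (p := -(v 0)) (q := -(v 1)) hc3 hv2pos
          (by linarith) (by linarith) (by linarith)
      have hw1pos : 0 < -(w 1) := by
        have hp : 0 < -(w 1) * (n2:ℤ) := by
          nlinarith [mul_pos hw0 hn1, mul_nonneg hb2 hn3.le]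
        nlinarith
      have hw1c2 : (c2 : ℤ) ≤ -(w 1) :=
        sg_bound (k := -(w 1)) (p := w 0) (q := w 2) hc2 hw1pos
          hw0.le hb2 (by linarith)
      by_cases hz : u = ![0, -(c2:ℤ), (c3:ℤ)]
      · have hu0 : u 0 = 0 := by rw [hz]; rfl
        have hu1 : u 1 = -(c2:ℤ) := by rw [hz]; rfl
        have hu2 : u 2 = (c3:ℤ) := by rw [hz]; rfl
        have hv1 : v 1 = 0 := by clear * - hu1 e1 hw1c2 ha1; omega
        have hv2 : v 2 = (c3:ℤ) := by clear * - hu2 e2 hv2c3 hb2; omega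
        exact keylemma n1 n2 n3 c1 c2 c3 h1 h2 h3 hc1 hc2 hc3 hCI (-(v 0))
          (by linarith) (by rw [hv1, hv2] at hvK; linarith)
      · apply hgraver
        have g1 : u 1 ≤ -(c2:ℤ) := by clear * - e1 hw1c2 ha1; omega
        have g2 : (c3:ℤ) ≤ u 2 := by clear * - e2 hv2c3 hb2; omega
        have m0 : max (u 0) 0 = max (0:ℤ) 0 + max (u 0 - 0) 0 ∧
            max (-(u 0)) 0 = max (-(0:ℤ)) 0 + max (-(u 0 - 0)) 0 := by clear * - g1; omega
        have m1 : max (u 1) 0 = max (-(c2:ℤ)) 0 + max (u 1 - -(c2:ℤ)) 0 ∧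
            max (-(u 1)) 0 = max (-(-(c2:ℤ))) 0 + max (-(u 1 - -(c2:ℤ))) 0 := by clear * - g1; omega
        have m2 : max (u 2) 0 = max ((c3:ℤ)) 0 + max (u 2 - (c3:ℤ)) 0 ∧
            max (-(u 2)) 0 = max (-((c3:ℤ))) 0 + max (-(u 2 - (c3:ℤ))) 0 := by clear * - g2; omega
        refine ⟨![0, -(c2:ℤ), (c3:ℤ)], u - ![0, -(c2:ℤ), (c3:ℤ)], ?_, ?_, ?_,
          sub_ne_zero.mpr hz, ?_, fun l => ?_⟩
        · show (0:ℤ) * n1 + -(c2:ℤ) * n2 + (c3:ℤ) * n3 = 0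
          linarith
        · show (u 0 - 0) * (n1:ℤ) + (u 1 - -(c2:ℤ)) * n2 + (u 2 - (c3:ℤ)) * n3 = 0
          linarith
        · intro h
          have h1' : (c3:ℤ) = 0 := congrFun h 2
          clear * - h1' hc3p; omega
        · funext i
          fin_cases i
          · exact (by ring : u 0 = 0 + (u 0 - 0))
          · exact (by ring : u 1 = -(c2:ℤ) + (u 1 - -(c2:ℤ)))
          · exact (by ring : u 2 = (c3:ℤ) + (u 2 - (c3:ℤ)))
        · fin_cases l
          · exact m0
          · exact m1
          · exact m2
    · nlinarith [mul_pos (show (0:ℤ) < -(v 0) by linarith) hn1,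
        mul_nonpos_of_nonpos_of_nonneg ha1 hn2.le,
        mul_nonpos_of_nonpos_of_nonneg ha2 hn3.le]
end
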